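/- arXiv:2312.04983 — 2 statements merged into one kernel-verified Lean document; each statement's English description precedes it below -/
import Mathlib

section
/- For real σ and κ > 0 and any nonnegative integer ω, the ω-th derivative with respect to κ of cosh(σ√κ) equals σ^(2ω) · ∑_{k≥0} (σ√κ)^(2k)/(2k)! · (k+ω)!(2k)!/(k!(2k+2ω)!). -/
open Real

noncomputable def myCoef (σ : ℝ) (ω k : ℕ) : ℝ :=
  σ ^ (2 * (k + ω)) * (Nat.factorial (k + ω) : ℝ) /
    ((Nat.factorial k : ℝ) * (Nat.factorial (2 * k + 2 * ω) : ℝ))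

noncomputable def myG (σ : ℝ) (ω : ℕ) (t : ℝ) : ℝ := ∑' k : ℕ, myCoef σ ω k * t ^ k

lemma myCoef_bound (σ : ℝ) (ω k : ℕ) :
    |myCoef σ ω k| ≤ |σ| ^ (2 * ω) * (σ ^ 2) ^ k / ((Nat.factorial k : ℝ) * Nat.factorial k) := by
  have hkle : (Nat.factorial k : ℝ) ≤ Nat.factorial (k + ω) := by
    exact_mod_cast Nat.factorial_le (Nat.le_add_right k ω)
  have hkw : (0:ℝ) < Nat.factorial (k + ω) := by exact_mod_cast Nat.factorial_pos (k + ω)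
  have hA : (Nat.factorial (k + ω) : ℝ) * Nat.factorial k ≤ Nat.factorial (2 * k + 2 * ω) := by
    have h1 : ((Nat.factorial (k + ω) : ℝ)) * Nat.factorial (k + ω) ≤
        Nat.factorial (2 * k + 2 * ω) := by
      have := Nat.factorial_mul_factorial_dvd_factorial_add (k + ω) (k + ω)
      have h2 : k + ω + (k + ω) = 2 * k + 2 * ω := by ring
      rw [h2] at this
      exact_mod_cast Nat.le_of_dvd (Nat.factorial_pos _) this
    nlinarith
  have hnn : (0:ℝ) ≤ σ ^ (2 * (k + ω)) := by rw [pow_mul]; positivity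
  have hσ : σ ^ (2 * (k + ω)) = |σ| ^ (2 * ω) * (σ ^ 2) ^ k := by
    rw [pow_mul, pow_mul, sq_abs, pow_add]; ring
  have habs : |myCoef σ ω k| =
      σ ^ (2 * (k + ω)) * (Nat.factorial (k + ω) : ℝ) /
        ((Nat.factorial k : ℝ) * Nat.factorial (2 * k + 2 * ω)) := by
    rw [myCoef, abs_of_nonneg]
    have : (0:ℝ) < Nat.factorial k := by exact_mod_cast Nat.factorial_pos k
    have h2 : (0:ℝ) < Nat.factorial (2 * k + 2 * ω) := by exact_mod_cast Nat.factorial_pos _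
    exact div_nonneg (mul_nonneg hnn hkw.le) (by positivity)
  have hk : (0:ℝ) < Nat.factorial k := by exact_mod_cast Nat.factorial_pos k
  have h2kw : (0:ℝ) < Nat.factorial (2 * k + 2 * ω) := by exact_mod_cast Nat.factorial_pos _
  rw [habs, hσ, div_le_div_iff₀ (by positivity) (by positivity)]
  have hC : (0:ℝ) ≤ |σ| ^ (2 * ω) * (σ ^ 2) ^ k := by positivity
  nlinarith [mul_le_mul_of_nonneg_left (mul_le_mul_of_nonneg_left hA hk.le) hC]

lemma myCoef_succ (σ : ℝ) (ω k : ℕ) :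
    myCoef σ ω (k + 1) * (k + 1) = myCoef σ (ω + 1) k := by
  unfold myCoef
  have e1 : k + 1 + ω = k + (ω + 1) := by ring
  have e2 : 2 * (k + 1) + 2 * ω = 2 * k + 2 * (ω + 1) := by ring
  rw [e1, e2, Nat.factorial_succ k]
  have h1 : (Nat.factorial k : ℝ) ≠ 0 := by exact_mod_cast (Nat.factorial_pos k).ne'
  have h2 : (Nat.factorial (2 * k + 2 * (ω + 1)) : ℝ) ≠ 0 := by
    exact_mod_cast (Nat.factorial_pos _).ne'
  have h3 : ((k : ℝ) + 1) ≠ 0 := by positivity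
  push_cast
  field_simp

lemma myDerivBound (σ : ℝ) (ω k : ℕ) {R y : ℝ} (hR1 : 1 ≤ R) (hy : |y| ≤ R) :
    ‖myCoef σ ω k * (k * y ^ (k - 1))‖ ≤
      |σ| ^ (2 * ω) * ((2 * σ ^ 2 * R) ^ k / Nat.factorial k) := by
  have hk : (0:ℝ) < Nat.factorial k := by exact_mod_cast Nat.factorial_pos k
  have h2 : |y| ^ (k - 1) ≤ R ^ k :=
    le_trans (pow_le_pow_left₀ (abs_nonneg y) hy _) (pow_le_pow_right₀ hR1 (Nat.sub_le k 1))
  have h3 : (k : ℝ) ≤ 2 ^ k := by exact_mod_cast (Nat.lt_two_pow_self (n := k)).le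
  have hb := myCoef_bound σ ω k
  have h4 : ‖myCoef σ ω k * (k * y ^ (k - 1))‖ =
      |myCoef σ ω k| * ((k : ℝ) * |y| ^ (k - 1)) := by
    rw [Real.norm_eq_abs, abs_mul, abs_mul, abs_pow, Nat.abs_cast]
  rw [h4]
  calc |myCoef σ ω k| * ((k : ℝ) * |y| ^ (k - 1))
      ≤ (|σ| ^ (2 * ω) * (σ ^ 2) ^ k / ((Nat.factorial k : ℝ) * Nat.factorial k)) *
        (2 ^ k * R ^ k) := by
        apply mul_le_mul hb (mul_le_mul h3 h2 (by positivity) (by positivity))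
          (by positivity)
        positivity
    _ = (|σ| ^ (2 * ω) * ((2 * σ ^ 2 * R) ^ k)) / ((Nat.factorial k : ℝ) * Nat.factorial k) := by
        rw [mul_pow, mul_pow]; ring
    _ ≤ (|σ| ^ (2 * ω) * ((2 * σ ^ 2 * R) ^ k)) / (Nat.factorial k : ℝ) := by
        apply div_le_div_of_nonneg_left (by positivity) hk
        have h1k : (1:ℝ) ≤ Nat.factorial k := by exact_mod_cast Nat.one_le_iff_ne_zero.mpr (Nat.factorial_pos k).ne'
        nlinarith
    _ = |σ| ^ (2 * ω) * ((2 * σ ^ 2 * R) ^ k / Nat.factorial k) := by ring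

lemma myG_hasDerivAt (σ : ℝ) (ω : ℕ) (t : ℝ) :
    HasDerivAt (myG σ ω) (myG σ (ω + 1) t) t := by
  set R : ℝ := |t| + 1 with hR
  have hR1 : 1 ≤ R := by simp [hR]
  have htR : t ∈ Metric.ball (0 : ℝ) R := by
    simp [Metric.mem_ball, Real.dist_eq, hR]
  have h0R : (0 : ℝ) ∈ Metric.ball (0 : ℝ) R := by
    simp [Metric.mem_ball]; linarith
  have hu : Summable (fun k : ℕ =>
      |σ| ^ (2 * ω) * ((2 * σ ^ 2 * R) ^ k / Nat.factorial k)) :=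
    (Real.summable_pow_div_factorial _).mul_left _
  have hg' : ∀ (k : ℕ) (y : ℝ), y ∈ Metric.ball (0 : ℝ) R →
      ‖myCoef σ ω k * (↑k * y ^ (k - 1))‖ ≤
        |σ| ^ (2 * ω) * ((2 * σ ^ 2 * R) ^ k / Nat.factorial k) := by
    intro k y hy
    apply myDerivBound σ ω k hR1
    simp [Metric.mem_ball, Real.dist_eq] at hy
    linarith
  have hg0 : Summable fun k : ℕ => myCoef σ ω k * (0 : ℝ) ^ k := by
    apply summable_of_ne_finset_zero (s := {0})
    intro k hk
    simp at hk
    simp [zero_pow hk]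
  have hD : HasDerivAt (fun z : ℝ => ∑' k : ℕ, myCoef σ ω k * z ^ k)
      (∑' k : ℕ, myCoef σ ω k * ((k : ℝ) * t ^ (k - 1))) t := by
    apply hasDerivAt_tsum_of_isPreconnected hu Metric.isOpen_ball
      (convex_ball (0:ℝ) R).isPreconnected
      (fun k y _ => (hasDerivAt_pow k y).const_mul (myCoef σ ω k)) hg' h0R hg0 htR
  have hsum : Summable fun k : ℕ => myCoef σ ω k * ((k : ℝ) * t ^ (k - 1)) :=
    Summable.of_norm_bounded hu (fun k => hg' k t htR)
  have heq : (∑' k : ℕ, myCoef σ ω k * ((k : ℝ) * t ^ (k - 1))) = myG σ (ω + 1) t := by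
    rw [Summable.tsum_eq_zero_add hsum]
    simp only [Nat.cast_zero, zero_mul, mul_zero, zero_add]
    rw [myG]
    congr 1
    funext k
    have : myCoef σ ω (k + 1) * ((k + 1 : ℕ) : ℝ) * t ^ k = myCoef σ (ω + 1) k * t ^ k := by
      rw [mul_comm (myCoef σ ω (k+1)) _]
      rw [← myCoef_succ σ ω k]
      push_cast
      ring
    push_cast at this ⊢
    calc myCoef σ ω (k + 1) * (((k:ℝ) + 1) * t ^ (k + 1 - 1))
        = myCoef σ ω (k + 1) * ((k:ℝ) + 1) * t ^ k := by norm_num; ring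
      _ = myCoef σ (ω + 1) k * t ^ k := this
  rw [← heq]
  exact hD

lemma myKey (σ : ℝ) (ω : ℕ) : ∀ x ∈ Set.Ioi (0:ℝ),
    iteratedDeriv ω (fun t : ℝ => Real.cosh (σ * Real.sqrt t)) x = myG σ ω x := by
  induction ω with
  | zero =>
    intro x hx
    simp only [iteratedDeriv_zero]
    rw [Real.cosh_eq_tsum, myG]
    congr 1
    funext k
    have hx0 : (0:ℝ) ≤ x := le_of_lt hx
    have hs : Real.sqrt x ^ (2 * k) = x ^ k := by
      rw [pow_mul, Real.sq_sqrt hx0]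
    have hp : (σ * Real.sqrt x) ^ (2 * k) = σ ^ (2 * k) * x ^ k := by
      rw [mul_pow, hs]
    rw [hp, myCoef]
    have h1 : (Nat.factorial k : ℝ) ≠ 0 := by exact_mod_cast (Nat.factorial_pos k).ne'
    have h2 : (Nat.factorial (2 * k) : ℝ) ≠ 0 := by exact_mod_cast (Nat.factorial_pos _).ne'
    simp only [Nat.add_zero, Nat.mul_zero]
    field_simp
  | succ ω ih =>
    intro x hx
    rw [iteratedDeriv_succ]
    have hev : iteratedDeriv ω (fun t : ℝ => Real.cosh (σ * Real.sqrt t)) =ᶠ[nhds x] myG σ ω :=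
      Filter.eventuallyEq_of_mem (isOpen_Ioi.mem_nhds hx) ih
    rw [hev.deriv_eq, (myG_hasDerivAt σ ω x).deriv]

/-- For real `σ`, `κ > 0` and a nonnegative integer `ω`, the `ω`-th derivative of
`κ ↦ cosh (σ √κ)` at `κ` equals
`σ^(2ω) · ∑_{k≥0} (σ√κ)^(2k)/(2k)! · (k+ω)!(2k)!/(k!(2k+2ω)!)`. -/
theorem iteratedDeriv_cosh_sqrt (σ κ : ℝ) (hκ : 0 < κ) (ω : ℕ) :
    iteratedDeriv ω (fun t : ℝ => Real.cosh (σ * Real.sqrt t)) κ =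
      σ ^ (2 * ω) *
        ∑' k : ℕ,
          (σ * Real.sqrt κ) ^ (2 * k) / Nat.factorial (2 * k) *
            ((Nat.factorial (k + ω) * Nat.factorial (2 * k) : ℝ) /
              (Nat.factorial k * Nat.factorial (2 * k + 2 * ω))) := by
  rw [myKey σ ω κ hκ, myG, ← tsum_mul_left]
  congr 1
  funext k
  have hκ0 : (0:ℝ) ≤ κ := le_of_lt hκ
  have hs : Real.sqrt κ ^ (2 * k) = κ ^ k := by
    rw [pow_mul, Real.sq_sqrt hκ0]
  have hp : (σ * Real.sqrt κ) ^ (2 * k) = σ ^ (2 * k) * κ ^ k := by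
    rw [mul_pow, hs]
  rw [hp, myCoef]
  have h1 : (Nat.factorial k : ℝ) ≠ 0 := by exact_mod_cast (Nat.factorial_pos k).ne'
  have h2 : (Nat.factorial (2 * k) : ℝ) ≠ 0 := by exact_mod_cast (Nat.factorial_pos _).ne'
  have h3 : (Nat.factorial (2 * k + 2 * ω) : ℝ) ≠ 0 := by exact_mod_cast (Nat.factorial_pos _).ne'
  have hσ : σ ^ (2 * (k + ω)) = σ ^ (2 * k) * σ ^ (2 * ω) := by
    rw [← pow_add]; ring_nf
  rw [hσ]
  field_simp
end

section
/- Let K ∈ ℝ^{n-1} and ξ' ∈ ℝ^{n-1} with |ξ'|² ≤ c < 1 and |K| ≤ M. Then there exists ε₁ > 0 (depending only on c and M) such that 1 − Re√((1+iK·ξ')² − (1−|ξ'|²)(1+|K|²)) > ε₁ for all such K, ξ'. -/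
open Complex

lemma re_cpow_half_nonneg (z : ℂ) : 0 ≤ (z ^ ((1:ℂ)/2)).re := by
  rcases eq_or_ne z 0 with rfl | hz
  · rw [zero_cpow (by norm_num)]; simp
  rw [cpow_def_of_ne_zero hz, exp_re]
  apply mul_nonneg (Real.exp_nonneg _)
  have him : (log z * ((1:ℂ)/2)).im = z.arg / 2 := by
    simp [Complex.mul_im, Complex.log_im]; ring
  rw [him]
  apply Real.cos_nonneg_of_mem_Icc
  constructor
  · linarith [Complex.neg_pi_lt_arg z]
  · linarith [Complex.arg_le_pi z]

lemma sq_re_cpow_half (z : ℂ) :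
    (z ^ ((1:ℂ)/2)).re ^ 2 = (‖z‖ + z.re) / 2 := by
  rcases eq_or_ne z 0 with rfl | hz
  · rw [zero_cpow (by norm_num)]; simp
  have hw : (z ^ ((1:ℂ)/2)) ^ 2 = z := by
    have : ((1:ℂ)/2) = (((2:ℕ):ℂ))⁻¹ := by norm_num
    rw [this]
    exact_mod_cast cpow_nat_inv_pow z two_ne_zero
  set w := z ^ ((1:ℂ)/2) with hwdef
  have h1 : z.re = w.re ^ 2 - w.im ^ 2 := by
    rw [← hw]; simp [pow_two, Complex.mul_re]
  have h2 : ‖z‖ = w.re ^ 2 + w.im ^ 2 := by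
    rw [← hw, norm_pow, Complex.sq_norm, Complex.normSq_apply]; ring
  rw [h1, h2]; ring

set_option maxHeartbeats 1600000 in
/-- Fix `0 < c < 1` and `M > 0`. There exists `ε₁ > 0` such that for all
`K, ξ' ∈ ℝ^{n-1}` with `‖K‖ ≤ M` and `‖ξ'‖² ≤ c`, one has
`1 − Re √((1 + i K·ξ')² − (1 − ‖ξ'‖²)(1 + ‖K‖²)) > ε₁`, where `√` is the
principal complex square root. -/
theorem uniform_lower_bound_re_sqrt (n : ℕ) (c M : ℝ) (hc0 : 0 < c) (hc1 : c < 1)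
    (hM : 0 < M) :
    ∃ ε₁ > 0, ∀ K ξ' : EuclideanSpace ℝ (Fin (n - 1)),
      ‖K‖ ≤ M → ‖ξ'‖ ^ 2 ≤ c →
      1 - ((((1 : ℂ) + (inner ℝ K ξ' : ℝ) * Complex.I) ^ 2 -
            ((1 : ℂ) - (‖ξ'‖ : ℂ) ^ 2) * (1 + (‖K‖ : ℂ) ^ 2)) ^ ((1 : ℂ) / 2)).re
        > ε₁ := by
  have hden : (0:ℝ) < 16 * (1 + M^2) := by positivity
  set ε : ℝ := min (1/2) ((1 - c) / (16 * (1 + M^2))) with hεdef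
  have hεpos : 0 < ε := lt_min (by norm_num) (div_pos (by linarith) hden)
  have hεhalf : ε ≤ 1/2 := min_le_left _ _
  have hεc : ε * (16 * (1 + M^2)) ≤ 1 - c := by
    rw [← le_div_iff₀ hden]; exact min_le_right _ _
  clear_value ε
  refine ⟨ε, hεpos, ?_⟩
  intro K ξ' hK hξ
  set a : ℝ := (inner ℝ K ξ' : ℝ) with ha
  set r : ℝ := ‖ξ'‖ with hr
  set k : ℝ := ‖K‖ with hk
  set z : ℂ := ((1 : ℂ) + (a : ℂ) * Complex.I) ^ 2 -
      ((1 : ℂ) - (r : ℂ) ^ 2) * (1 + (k : ℂ) ^ 2) with hz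
  set d : ℝ := 1 - a^2 - (1 - r^2) * (1 + k^2) with hd
  have hCS : a^2 ≤ k^2 * r^2 := by
    have h := abs_real_inner_le_norm K ξ'
    nlinarith [abs_nonneg (inner ℝ K ξ' : ℝ), _root_.sq_abs (inner ℝ K ξ' : ℝ), norm_nonneg K, norm_nonneg ξ']
  have hzre : z.re = d := by
    simp [hz, hd, pow_two, Complex.mul_re, Complex.mul_im, Complex.sub_re]
  have hzim : z.im = 2 * a := by
    simp [hz, pow_two, Complex.mul_re, Complex.mul_im]
    ring
  -- basic real bounds
  have hr0 : 0 ≤ r := norm_nonneg _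
  have hk0 : 0 ≤ k := norm_nonneg _
  clear_value a r k z
  clear ha hr hk hz K ξ'
  have ha2 : a^2 ≤ M^2 * c := by nlinarith [mul_self_le_mul_self hk0 hK, sq_nonneg r]
  have hp : 1 - c ≤ (1 - r^2) * (1 + k^2) := by nlinarith
  have hp2 : (1 - r^2) * (1 + k^2) ≤ 1 + M^2 := by nlinarith
  -- abs z
  have habs2 : ‖z‖^2 = d^2 + (2*a)^2 := by
    rw [Complex.sq_norm, Complex.normSq_apply, hzre, hzim]; ring
  have habs0 : 0 ≤ ‖z‖ := norm_nonneg _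
  set u : ℝ := (1 - ε)^2 with hu
  have hu14 : (1:ℝ)/4 ≤ u := by nlinarith [sq_nonneg (1 - ε - 1/2)]
  have hu1 : u ≤ 1 := by nlinarith [sq_nonneg ε]
  have ha2n : (0:ℝ) ≤ a^2 := sq_nonneg a
  have h1 : u * (u - d) - a^2 = (u - 1) * (u + a^2) + u * ((1 - r^2) * (1 + k^2)) := by
    rw [hd, hu]; ring
  have h1u : 1 - u ≤ 2 * ε := by rw [hu]; nlinarith [sq_nonneg ε]
  have hua : u + a^2 ≤ 1 + M^2 := by nlinarith [sq_nonneg M]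
  have huε : u = (1 - ε)^2 := hu
  clear_value d u
  clear hd hu hεdef
  -- key inequality : a^2 < u * (u - d)
  have hkey : a^2 < u * (u - d) := by
    have hprod : (1 - u) * (u + a^2) ≤ (2*ε) * (1 + M^2) :=
      mul_le_mul h1u hua (by linarith) (by positivity)
    have hup : (1/4) * (1 - c) ≤ u * ((1 - r^2) * (1 + k^2)) :=
      mul_le_mul hu14 hp (by linarith) (by linarith)
    nlinarith [h1, hprod, hup, hεc]
  have hud : d < u := by nlinarith [hkey, ha2n]
  have habslt : ‖z‖ < 2 * u - d := by
    refine lt_of_pow_lt_pow_left₀ 2 (by linarith) ?_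
    rw [habs2]; nlinarith [hkey]
  -- conclude
  have hre2 : (z ^ ((1:ℂ)/2)).re ^ 2 = (‖z‖ + d) / 2 := by
    rw [sq_re_cpow_half, hzre]
  have hre0 : 0 ≤ (z ^ ((1:ℂ)/2)).re := re_cpow_half_nonneg z
  have hfin : (z ^ ((1:ℂ)/2)).re < 1 - ε := by
    refine lt_of_pow_lt_pow_left₀ 2 (by linarith) ?_
    rw [hre2, ← huε]; linarith
  linarith
end
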